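/- The category FPCM of trace monoids and basic homomorphisms is isomorphic to the category ComRel whose objects are pairs (E₊, T) of a pointed set E₊ = E ⊔ {*} and a relation T ⊆ E₊ × E₊ that is reflexive, symmetric, and contains all pairs (a,*) and (*,a); morphisms of ComRel are pointed maps preserving the relation. -/

import Mathlib

open CategoryTheory

/-- The elementary commutation relation on words generated by an independence relation. -/
def traceRel (E : Type) (I : Set (E × E)) : FreeMonoid E → FreeMonoid E → Prop :=
  fun x y => ∃ a b : E, (a, b) ∈ I ∧ x = FreeMonoid.of a * FreeMonoid.of b ∧
    y = FreeMonoid.of b * FreeMonoid.of a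

/-- The congruence on the free monoid generated by commutation of independent pairs. -/
def traceCon (E : Type) (I : Set (E × E)) : Con (FreeMonoid E) := conGen (traceRel E I)

/-- The trace monoid `M(E,I)`. -/
abbrev TraceMonoid (E : Type) (I : Set (E × E)) : Type := (traceCon E I).Quotient

/-- The canonical projection from words to traces. -/
def trcMk {E : Type} {I : Set (E × E)} : FreeMonoid E →* TraceMonoid E I :=
  (traceCon E I).mk'

/-- The generator of the trace monoid corresponding to an event `e`. -/
def trc {E : Type} {I : Set (E × E)} (e : E) : TraceMonoid E I :=
  trcMk (FreeMonoid.of e)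

/-- `I` is an independence relation: irreflexive and symmetric. -/
structure IsIndep {E : Type} (I : Set (E × E)) : Prop where
  irrefl : ∀ a : E, (a, a) ∉ I
  symm : ∀ a b : E, (a, b) ∈ I → (b, a) ∈ I

/-- A homomorphism of trace monoids is basic if it sends generators to generators or to `1`. -/
def IsBasic {E E' : Type} {I : Set (E × E)} {I' : Set (E' × E')}
    (f : TraceMonoid E I →* TraceMonoid E' I') : Prop :=
  ∀ e : E, (∃ e' : E', f (trc e) = trc e') ∨ f (trc e) = 1

/-- A basic homomorphism preserves independence. -/
def IsIndepPres {E E' : Type} {I : Set (E × E)} {I' : Set (E' × E')}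
    (f : TraceMonoid E I →* TraceMonoid E' I') : Prop :=
  ∀ a b : E, (a, b) ∈ I → f (trc a) ≠ f (trc b) ∨ (f (trc a) = 1 ∧ f (trc b) = 1)

/-- The monoid homomorphism out of a trace monoid induced by a map on generators whose
images commute at independent pairs. -/
def liftHom {E : Type} {I : Set (E × E)} {N : Type*} [Monoid N] (φ : E → N)
    (hφ : ∀ a b : E, (a, b) ∈ I → φ a * φ b = φ b * φ a) : TraceMonoid E I →* N :=
  (traceCon E I).lift (FreeMonoid.lift φ) (by
    apply Con.conGen_le.2
    rintro x y ⟨a, b, hab, rfl, rfl⟩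
    rw [Con.ker_rel]
    simp only [map_mul, FreeMonoid.lift_eval_of]
    exact hφ a b hab)

@[simp] theorem liftHom_trc {E : Type} {I : Set (E × E)} {N : Type*} [Monoid N] (φ : E → N)
    (hφ : ∀ a b : E, (a, b) ∈ I → φ a * φ b = φ b * φ a) (e : E) :
    liftHom φ hφ (trc (I := I) e) = φ e := by
  show (traceCon E I).lift _ _ ((traceCon E I).mk' (FreeMonoid.of e)) = φ e
  exact FreeMonoid.lift_eval_of φ e

theorem trc_comm {E : Type} {I : Set (E × E)} {a b : E} (h : (a, b) ∈ I) :
    (trc a : TraceMonoid E I) * trc b = trc b * trc a := by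
  show trcMk (FreeMonoid.of a) * trcMk (FreeMonoid.of b) =
    trcMk (FreeMonoid.of b) * trcMk (FreeMonoid.of a)
  rw [← map_mul, ← map_mul]
  exact (Con.eq _).2 (ConGen.Rel.of _ _ ⟨a, b, h, rfl, rfl⟩)

theorem isBasic_id {E : Type} {I : Set (E × E)} :
    IsBasic (MonoidHom.id (TraceMonoid E I)) := fun e => Or.inl ⟨e, rfl⟩

theorem isBasic_comp {E₁ E₂ E₃ : Type} {I₁ : Set (E₁ × E₁)} {I₂ : Set (E₂ × E₂)}
    {I₃ : Set (E₃ × E₃)} {f : TraceMonoid E₁ I₁ →* TraceMonoid E₂ I₂}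
    {g : TraceMonoid E₂ I₂ →* TraceMonoid E₃ I₃} (hf : IsBasic f) (hg : IsBasic g) :
    IsBasic (g.comp f) := by
  intro e
  rcases hf e with ⟨e', he⟩ | he
  · rcases hg e' with ⟨e'', he''⟩ | he''
    · exact Or.inl ⟨e'', by simp [MonoidHom.comp_apply, he, he'']⟩
    · exact Or.inr (by simp [MonoidHom.comp_apply, he, he''])
  · exact Or.inr (by simp [MonoidHom.comp_apply, he])
/-- An object of the category `FPCM`: a set of events with an independence relation. -/
structure FPCMObj where
  E : Type
  I : Set (E × E)
  indep : IsIndep I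

/-- The category `FPCM` of trace monoids and basic homomorphisms. -/
instance : Category FPCMObj where
  Hom X Y := {f : TraceMonoid X.E X.I →* TraceMonoid Y.E Y.I // IsBasic f}
  id _ := ⟨MonoidHom.id _, isBasic_id⟩
  comp f g := ⟨g.1.comp f.1, isBasic_comp f.2 g.2⟩
  id_comp _ := Subtype.ext (MonoidHom.comp_id _)
  comp_id _ := Subtype.ext (MonoidHom.id_comp _)
  assoc _ _ _ := Subtype.ext rfl

/-- An object of the category `ComRel`: a pointed set `E ⊔ {*}` (modelled as `Option E` with
point `none`) together with a reflexive symmetric commutativity relation containing all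
pairs with the point. -/
structure ComRelObj where
  E : Type
  T : Set (Option E × Option E)
  refl : ∀ a : Option E, (a, a) ∈ T
  symm : ∀ a b : Option E, (a, b) ∈ T → (b, a) ∈ T
  star_left : ∀ a : Option E, ((none : Option E), a) ∈ T
  star_right : ∀ a : Option E, (a, (none : Option E)) ∈ T

/-- The category `ComRel` of pointed sets with commutativity relations and pointed
relation-preserving maps. -/
instance : Category ComRelObj where
  Hom X Y := {φ : Option X.E → Option Y.E //
    φ none = none ∧ ∀ a b : Option X.E, (a, b) ∈ X.T → (φ a, φ b) ∈ Y.T}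
  id _ := ⟨id, rfl, fun _ _ h => h⟩
  comp f g := ⟨g.1 ∘ f.1, by simp [f.2.1, g.2.1], fun a b h => g.2.2 _ _ (f.2.2 _ _ h)⟩
  id_comp _ := Subtype.ext rfl
  comp_id _ := Subtype.ext rfl
  assoc _ _ _ := Subtype.ext rfl

/-- The commutativity relation `T = I ∪ (E × {*}) ∪ ({*} × E) ∪ Δ` associated to an
independence relation `I`. -/
def comRelOf (X : FPCMObj) : ComRelObj where
  E := X.E
  T := {p | p.1 = p.2 ∨ p.1 = none ∨ p.2 = none ∨
        ∃ a b : X.E, (a, b) ∈ X.I ∧ p = (some a, some b)}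
  refl _ := Or.inl rfl
  symm a b h := by
    rcases h with h | h | h | ⟨x, y, hxy, h⟩
    · exact Or.inl h.symm
    · exact Or.inr (Or.inr (Or.inl h))
    · exact Or.inr (Or.inl h)
    · refine Or.inr (Or.inr (Or.inr ⟨y, x, X.indep.symm _ _ hxy, ?_⟩))
      obtain ⟨h1, h2⟩ := Prod.mk.injEq .. ▸ h
      simp_all
  star_left _ := Or.inr (Or.inl rfl)
  star_right _ := Or.inr (Or.inr (Or.inl rfl))

/-!
A basic homomorphism `f : M(E,I) → M(E',I')` is determined by the pointed map `f₊` it induces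
on generators, and conversely a pointed map `E₊ → E'₊` extends to a homomorphism exactly when
it sends pairs of `I` to commuting traces. The two constructions therefore match once one
knows that `T` is the commutation relation of `M(E,I)` on `E₊`: two generators `a`, `b`
commute iff `a = b` or `(a, b) ∈ I`.
-/

section TraceMonoid

variable {E : Type} {I : Set (E × E)}

def optTrc (o : Option E) : TraceMonoid E I := o.elim 1 trc

theorem traceHom_ext {N : Type*} [Monoid N] {f g : TraceMonoid E I →* N}
    (h : ∀ e, f (trc e) = g (trc e)) : f = g := by
  ext e
  exact h e

def letters : TraceMonoid E I →* Multiplicative (Multiset E) :=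
  liftHom (fun e => Multiplicative.ofAdd {e}) (fun _ _ _ => mul_comm _ _)

theorem trc_injective : Function.Injective (trc : E → TraceMonoid E I) := fun a b h => by
  simpa [letters] using congrArg letters h

theorem trc_ne_one (e : E) : (trc e : TraceMonoid E I) ≠ 1 := fun h => by
  simpa [letters] using congrArg letters h

theorem optTrc_injective : Function.Injective (optTrc : Option E → TraceMonoid E I) := by
  rintro (_ | a) (_ | b) h
  · rfl
  · exact absurd h.symm (trc_ne_one b)
  · exact absurd h (trc_ne_one a)
  · exact congrArg some (trc_injective h)

/-- Otherwise the homomorphism erasing every letter other than `a` and `b` maps `ab = ba`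
to an equation between distinct words. -/
theorem eq_or_mem_of_commute_trc (hI : ∀ a b : E, (a, b) ∈ I → (b, a) ∈ I) {a b : E}
    (h : Commute (trc a : TraceMonoid E I) (trc b)) : a = b ∨ (a, b) ∈ I := by
  classical
  by_cases hab : (a, b) ∈ I
  · exact Or.inr hab
  let erase : E → FreeMonoid E := fun c => if c = a ∨ c = b then .of c else 1
  have herase : ∀ c d : E, (c, d) ∈ I → erase c * erase d = erase d * erase c := by
    intro c d hcd
    by_cases hc : c = a ∨ c = b <;> by_cases hd : d = a ∨ d = b <;> simp only [erase, hc, hd,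
      if_true, if_false, one_mul, mul_one]
    rcases hc with rfl | rfl <;> rcases hd with rfl | rfl
    all_goals first | rfl | exact absurd hcd hab | exact absurd (hI _ _ hcd) hab
  have := congrArg FreeMonoid.toList (congrArg (liftHom erase herase) h.eq)
  simp only [map_mul, liftHom_trc, erase, true_or, or_true, if_true, FreeMonoid.toList_mul,
    FreeMonoid.toList_of, List.cons_append, List.nil_append, List.cons.injEq, and_true] at this
  exact Or.inl this.1

end TraceMonoid

section Basic

variable {E E' : Type} {I : Set (E × E)} {I' : Set (E' × E')}

/-- The map `f₊` on generators; a junk value at `e` unless `f (trc e)` is a generator or `1`. -/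
noncomputable def generatorMap (f : TraceMonoid E I →* TraceMonoid E' I') : E → Option E' :=
  fun e => Function.invFun optTrc (f (trc e))

theorem IsBasic.map_trc {f : TraceMonoid E I →* TraceMonoid E' I'} (hf : IsBasic f) (e : E) :
    f (trc e) = optTrc (generatorMap f e) := by
  refine (Function.invFun_eq ?_).symm
  rcases hf e with ⟨e', he⟩ | he
  exacts [⟨some e', he.symm⟩, ⟨none, he.symm⟩]

theorem IsBasic.map_optTrc {f : TraceMonoid E I →* TraceMonoid E' I'} (hf : IsBasic f)
    (o : Option E) : f (optTrc o) = optTrc (o.bind (generatorMap f)) := by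
  cases o with
  | none => exact map_one f
  | some e => exact hf.map_trc e

theorem generatorMap_eq {f : TraceMonoid E I →* TraceMonoid E' I'} {φ : E → Option E'}
    (h : ∀ e, f (trc e) = optTrc (φ e)) : generatorMap f = φ :=
  funext fun e => by rw [generatorMap, h, Function.leftInverse_invFun optTrc_injective]

theorem isBasic_of_map_trc {f : TraceMonoid E I →* TraceMonoid E' I'} {φ : E → Option E'}
    (h : ∀ e, f (trc e) = optTrc (φ e)) : IsBasic f := by
  intro e
  rw [h]
  cases φ e with
  | none => exact Or.inr rfl
  | some e' => exact Or.inl ⟨e', rfl⟩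

end Basic

theorem mem_comRelOf_iff_commute {X : FPCMObj} {a b : Option X.E} :
    (a, b) ∈ (comRelOf X).T ↔ Commute (optTrc a : TraceMonoid X.E X.I) (optTrc b) := by
  constructor
  · rintro (h | h | h | ⟨x, y, hxy, h⟩)
    · obtain rfl : a = b := h
      exact Commute.refl _
    · obtain rfl : a = none := h
      exact Commute.one_left _
    · obtain rfl : b = none := h
      exact Commute.one_right _
    · obtain ⟨rfl, rfl⟩ := Prod.mk.inj h
      exact trc_comm hxy
  · intro h
    rcases a with _ | x
    · exact Or.inr (Or.inl rfl)
    rcases b with _ | y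
    · exact Or.inr (Or.inr (Or.inl rfl))
    rcases eq_or_mem_of_commute_trc X.indep.symm h with rfl | hxy
    exacts [Or.inl rfl, Or.inr (Or.inr (Or.inr ⟨x, y, hxy, rfl⟩))]

theorem bind_generatorMap_mem_comRelOf {X Y : FPCMObj} (f : X ⟶ Y) {a b : Option X.E}
    (hab : (a, b) ∈ (comRelOf X).T) :
    (a.bind (generatorMap f.1), b.bind (generatorMap f.1)) ∈ (comRelOf Y).T := by
  have := (mem_comRelOf_iff_commute.mp hab).map f.1
  rw [f.2.map_optTrc, f.2.map_optTrc] at this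
  exact mem_comRelOf_iff_commute.mpr this

noncomputable def fpcmToComRel : FPCMObj ⥤ ComRelObj where
  obj := comRelOf
  map f :=
    ⟨fun o => o.bind (generatorMap f.1), rfl, fun _ _ => bind_generatorMap_mem_comRelOf f⟩
  map_id X := by
    have : generatorMap (𝟙 X : X ⟶ X).1 = some := generatorMap_eq fun _ => rfl
    refine Subtype.ext (funext fun (o : Option X.E) => ?_)
    show o.bind (generatorMap (𝟙 X : X ⟶ X).1) = o
    rw [this, Option.bind_fun_some]
  map_comp {X _ _} f g := by
    have : generatorMap (f ≫ g).1 = fun e => (generatorMap f.1 e).bind (generatorMap g.1) :=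
      generatorMap_eq fun e => by rw [← g.2.map_optTrc, ← f.2.map_trc]; rfl
    refine Subtype.ext (funext fun (o : Option X.E) => ?_)
    show o.bind (generatorMap (f ≫ g).1) = (o.bind (generatorMap f.1)).bind (generatorMap g.1)
    rw [this, o.bind_assoc]

abbrev fpcmObjOf (Y : ComRelObj) : FPCMObj where
  E := Y.E
  I := {p | (some p.1, some p.2) ∈ Y.T ∧ p.1 ≠ p.2}
  indep := ⟨fun _ h => h.2 rfl, fun _ _ h => ⟨Y.symm _ _ h.1, h.2.symm⟩⟩

theorem mem_comRelOf_fpcmObjOf {Y : ComRelObj} {a b : Option Y.E} :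
    (a, b) ∈ (comRelOf (fpcmObjOf Y)).T ↔ (a, b) ∈ Y.T := by
  constructor
  · rintro (h | h | h | ⟨x, y, hxy, h⟩)
    · obtain rfl : a = b := h
      exact Y.refl a
    · obtain rfl : a = none := h
      exact Y.star_left b
    · obtain rfl : b = none := h
      exact Y.star_right a
    · obtain ⟨rfl, rfl⟩ := Prod.mk.inj h
      exact hxy.1
  · intro h
    rcases a with _ | x
    · exact Or.inr (Or.inl rfl)
    rcases b with _ | y
    · exact Or.inr (Or.inr (Or.inl rfl))
    by_cases hxy : x = y
    exacts [Or.inl (congrArg some hxy), Or.inr (Or.inr (Or.inr ⟨x, y, ⟨h, hxy⟩, rfl⟩))]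

theorem comRelOf_fpcmObjOf (Y : ComRelObj) : comRelOf (fpcmObjOf Y) = Y := by
  obtain ⟨E, T, refl, symm, star_left, star_right⟩ := Y
  have hT : (comRelOf (fpcmObjOf ⟨E, T, refl, symm, star_left, star_right⟩)).T = T :=
    Set.ext fun _ => mem_comRelOf_fpcmObjOf
  simp only [comRelOf] at hT ⊢
  simp only [hT]

theorem fpcmObjOf_comRelOf (X : FPCMObj) : fpcmObjOf (comRelOf X) = X := by
  obtain ⟨E, I, indep⟩ := X
  simp only [fpcmObjOf, comRelOf, FPCMObj.mk.injEq, heq_eq_eq, true_and]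
  ext ⟨a, b⟩
  constructor
  · rintro ⟨h | h | h | ⟨x, y, hxy, h⟩, hne⟩
    · exact absurd (Option.some_injective _ h) hne
    · exact absurd h (Option.some_ne_none a)
    · exact absurd h (Option.some_ne_none b)
    · simp only [Prod.mk.injEq, Option.some_inj] at h
      rwa [h.1, h.2]
  · intro h
    refine ⟨Or.inr (Or.inr (Or.inr ⟨a, b, h, rfl⟩)), fun (hab : a = b) => ?_⟩
    exact indep.irrefl b (hab ▸ h)

theorem commute_optTrc_of_mem {Y : ComRelObj} {a b : Option Y.E} (h : (a, b) ∈ Y.T) :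
    Commute (optTrc a : TraceMonoid Y.E (fpcmObjOf Y).I) (optTrc b) :=
  mem_comRelOf_iff_commute.mp (mem_comRelOf_fpcmObjOf.mpr h)

noncomputable def basicHomOf {X Y : ComRelObj} (φ : X ⟶ Y) : fpcmObjOf X ⟶ fpcmObjOf Y :=
  ⟨liftHom (fun e => optTrc (φ.1 (some e)))
      fun _ _ hab => commute_optTrc_of_mem (φ.2.2 _ _ hab.1),
    isBasic_of_map_trc (liftHom_trc (fun e => optTrc (φ.1 (some e))) _)⟩

theorem basicHomOf_optTrc {X Y : ComRelObj} (φ : X ⟶ Y) (o : Option X.E) :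
    (basicHomOf φ).1 (optTrc o) = optTrc (φ.1 o) := by
  rcases o with _ | e
  · rw [φ.2.1]
    exact map_one _
  · exact liftHom_trc _ (fun _ _ hab => commute_optTrc_of_mem (φ.2.2 _ _ hab.1)) e

theorem generatorMap_basicHomOf {X Y : ComRelObj} (φ : X ⟶ Y) :
    generatorMap (basicHomOf φ).1 = fun e => φ.1 (some e) :=
  generatorMap_eq fun e => basicHomOf_optTrc φ (some e)

noncomputable def comRelToFpcm : ComRelObj ⥤ FPCMObj where
  obj := fpcmObjOf
  map := basicHomOf
  map_id X := Subtype.ext (traceHom_ext fun e => basicHomOf_optTrc (𝟙 X) (some e))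
  map_comp {X _ _} φ ψ := Subtype.ext (traceHom_ext fun (e : X.E) => by
    show (basicHomOf (φ ≫ ψ)).1 (optTrc (some e)) =
      (basicHomOf ψ).1 ((basicHomOf φ).1 (optTrc (some e)))
    rw [basicHomOf_optTrc, basicHomOf_optTrc, basicHomOf_optTrc]
    rfl)

theorem FPCMObj.hom_heq {X X' Y Y' : FPCMObj} (hX : X = X') (hY : Y = Y') (f : X ⟶ Y)
    (g : X' ⟶ Y') (h : HEq (generatorMap f.1) (generatorMap g.1)) : HEq f g := by
  subst hX hY
  refine heq_of_eq (Subtype.ext (traceHom_ext fun e => ?_))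
  rw [f.2.map_trc, g.2.map_trc, eq_of_heq h]

theorem ComRelObj.hom_heq {X X' Y Y' : ComRelObj} (hX : X = X') (hY : Y = Y') (φ : X ⟶ Y)
    (ψ : X' ⟶ Y') (h : HEq φ.1 ψ.1) : HEq φ ψ := by
  subst hX hY
  exact heq_of_eq (Subtype.ext (eq_of_heq h))

theorem fpcmToComRel_comp_comRelToFpcm : fpcmToComRel ⋙ comRelToFpcm = 𝟭 FPCMObj :=
  Functor.hext (fun X => fpcmObjOf_comRelOf X) fun X Y f =>
    FPCMObj.hom_heq (fpcmObjOf_comRelOf X) (fpcmObjOf_comRelOf Y)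
      (basicHomOf (fpcmToComRel.map f)) f (heq_of_eq (generatorMap_basicHomOf _))

theorem comRelToFpcm_comp_fpcmToComRel : comRelToFpcm ⋙ fpcmToComRel = 𝟭 ComRelObj :=
  Functor.hext (fun X => comRelOf_fpcmObjOf X) fun X Y φ =>
    ComRelObj.hom_heq (comRelOf_fpcmObjOf X) (comRelOf_fpcmObjOf Y)
      (fpcmToComRel.map (basicHomOf φ)) φ <| heq_of_eq <| by
      funext (o : Option X.E)
      rcases o with _ | e
      · exact φ.2.1.symm
      · exact congrFun (generatorMap_basicHomOf φ) e

/-- The category `FPCM` of trace monoids and basic homomorphisms is isomorphic to the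
category `ComRel` of pointed sets with commutativity relations; the isomorphism sends
`M(E,I)` to `(E ⊔ {*}, I ∪ (E × {*}) ∪ ({*} × E) ∪ Δ)`. -/
theorem fpcm_iso_comRel :
    ∃ (F : FPCMObj ⥤ ComRelObj) (G : ComRelObj ⥤ FPCMObj),
      F.obj = comRelOf ∧ F ⋙ G = 𝟭 FPCMObj ∧ G ⋙ F = 𝟭 ComRelObj :=
  ⟨fpcmToComRel, comRelToFpcm, rfl, fpcmToComRel_comp_comRelToFpcm,
    comRelToFpcm_comp_fpcmToComRel⟩
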